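/- Let Λ be an additive commutative group, H = k[Λ] the group Hopf algebra, (M, Δ_M) a right H-comodule such that M = ⊕_{α ∈ Λ} M_α, and (B, θ_B) a left H-contramodule. Equip Hom_k(M,B) with the diagonal contra-action θ_diag(Φ)(m) = θ_B(h ↦ Φ(m₍₁₎h)(m₍₀₎)). Then for every ν ∈ Λ, the weight space Hom_k(M,B)_ν of the contramodule (Hom_k(M,B), θ_diag) equals {f ∈ Hom_k(M,B) : f(M_α) ⊆ B_{ν−α} for all α ∈ Λ}; that is, Hom_k(M,B)_ν = ∏_{α+β=ν} Hom_k(M_α, B_β). -/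

import Mathlib

/-!
A linear map into `B` with values in the line `k ∙ x` is `h ↦ c h • x` for a functional
`c : H → k`, so `x ∈ B_β` just says `θ_B (c(·) • x) = c(e_β) • x` for every `c`. On a weight
vector `m ∈ M_α` the diagonal action only twists the argument by left multiplication with `e_α`,
so testing `f` against `Φ = c(e_{-α} ·) • f` shows `f(M_α) ⊆ B_{ν-α}`, while conversely
`θ_diag(c(·) • f)` and `c(e_ν) • f` agree on every `M_α`, hence on `M = ⊕ M_α`.
-/

open TensorProduct LinearMap

noncomputable section

variable (k : Type*) [Field k]
variable (H : Type*) [Ring H] [HopfAlgebra k H]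
variable (Λ : Type*) [AddCommGroup Λ] [DecidableEq Λ]

def IsComodule {M : Type*} [AddCommGroup M] [Module k M]
    (ρ : M →ₗ[k] M ⊗[k] H) : Prop :=
  ((TensorProduct.assoc k M H H).toLinearMap ∘ₗ (TensorProduct.map ρ LinearMap.id) ∘ₗ ρ
      = (TensorProduct.map LinearMap.id Coalgebra.comul) ∘ₗ ρ) ∧
  ((TensorProduct.rid k M).toLinearMap ∘ₗ
      (TensorProduct.map LinearMap.id Coalgebra.counit) ∘ₗ ρ = LinearMap.id)

def IsContramodule {B : Type*} [AddCommGroup B] [Module k B]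
    (θ : (H →ₗ[k] B) →ₗ[k] B) : Prop :=
  (∀ Φ : H →ₗ[k] (H →ₗ[k] B),
      θ (θ ∘ₗ Φ) = θ ((TensorProduct.lift Φ.flip) ∘ₗ Coalgebra.comul)) ∧
  (∀ b : B, θ ((LinearMap.toSpanSingleton k B b) ∘ₗ Coalgebra.counit) = b)

/-- The diagonal contra-action `θ_diag(Φ)(m) = θ_B(h ↦ Φ(m₍₁₎h)(m₍₀₎))` on `Hom_k(M,B)`. -/
def diagContra {M : Type*} [AddCommGroup M] [Module k M]
    {B : Type*} [AddCommGroup B] [Module k B]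
    (ρ : M →ₗ[k] M ⊗[k] H) (θB : (H →ₗ[k] B) →ₗ[k] B) :
    (H →ₗ[k] (M →ₗ[k] B)) →ₗ[k] (M →ₗ[k] B) :=
  (LinearMap.llcomp k M (H →ₗ[k] B) B θB) ∘ₗ
  (LinearMap.lcomp k (H →ₗ[k] B) ρ) ∘ₗ
  (TensorProduct.uncurry (RingHom.id k) M H (H →ₗ[k] B)) ∘ₗ
  (LinearMap.lflip (R₀ := k)).toLinearMap ∘ₗ
  (LinearMap.llcomp k H (H →ₗ[k] (M →ₗ[k] B)) (M →ₗ[k] (H →ₗ[k] B)) (LinearMap.lflip (R₀ := k)).toLinearMap) ∘ₗ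
  (TensorProduct.lcurry (RingHom.id k) H H (M →ₗ[k] B)) ∘ₗ
  (LinearMap.lcomp k (M →ₗ[k] B) (LinearMap.mul' k H))

/-- The weight space `M_α = {m : ρ(m) = m ⊗ e_α}` of a comodule. -/
def comodWeight {M : Type*} [AddCommGroup M] [Module k M]
    (ρ : M →ₗ[k] M ⊗[k] H) (e : Λ → H) (α : Λ) : Submodule k M :=
  LinearMap.ker (ρ - (TensorProduct.mk k M H).flip (e α))

/-- The weight space `B_β = {b : θ_B(φ) = φ(e_β) for all φ with range in k·b}`
of a contramodule. -/
def contraWeight {B : Type*} [AddCommGroup B] [Module k B]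
    (θB : (H →ₗ[k] B) →ₗ[k] B) (e : Λ → H) (β : Λ) : Set B :=
  {x | ∀ φ : H →ₗ[k] B, LinearMap.range φ ≤ Submodule.span k {x} → θB φ = φ (e β)}

theorem LinearMap.ext_of_iSup_eq_top {R M N ι : Type*} [Semiring R] [AddCommMonoid M]
    [Module R M] [AddCommMonoid N] [Module R N] {A : ι → Submodule R M} (hA : iSup A = ⊤)
    {f g : M →ₗ[R] N} (h : ∀ i, ∀ m ∈ A i, f m = g m) : f = g := by
  have hle : (⊤ : Submodule R M) ≤ LinearMap.eqLocus f g := hA ▸ iSup_le fun i m hm => h i m hm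
  exact LinearMap.ext fun m => hle Submodule.mem_top

theorem LinearMap.exists_eq_toSpanSingleton_comp_of_range_le {K V W : Type*} [DivisionRing K]
    [AddCommGroup V] [Module K V] [AddCommGroup W] [Module K W] {φ : V →ₗ[K] W} {x : W}
    (hφ : LinearMap.range φ ≤ K ∙ x) : ∃ c : V →ₗ[K] K, φ = toSpanSingleton K W x ∘ₗ c := by
  by_cases hx : x = 0
  · refine ⟨0, ?_⟩
    rw [hx, Submodule.span_zero_singleton, le_bot_iff, LinearMap.range_eq_bot] at hφ
    simp [hφ]
  · refine ⟨(LinearEquiv.coord K W x hx).toLinearMap ∘ₗ φ.codRestrict _ fun v => hφ ⟨v, rfl⟩, ?_⟩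
    ext v
    exact (LinearEquiv.coord_apply_smul K W x hx ⟨φ v, hφ ⟨v, rfl⟩⟩).symm

theorem eq_one_of_forall_mul_basis_eq {K A ι : Type*} [CommSemiring K] [Semiring A] [Algebra K A]
    (b : Module.Basis ι K A) {a : A} (h : ∀ i, a * b i = b i) : a = 1 := by
  have hmulLeft : LinearMap.mulLeft K a = LinearMap.id := b.ext fun i => h i
  simpa using LinearMap.congr_fun hmulLeft 1

section

variable {k H} {ι : Type*}
variable {M B : Type*} [AddCommGroup M] [Module k M] [AddCommGroup B] [Module k B]

theorem mem_comodWeight_iff {ρ : M →ₗ[k] M ⊗[k] H} {e : ι → H} {α : ι} {m : M} :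
    m ∈ comodWeight k H ι ρ e α ↔ ρ m = m ⊗ₜ[k] e α := by
  simp [comodWeight, sub_eq_zero]

theorem mem_contraWeight_iff {θB : (H →ₗ[k] B) →ₗ[k] B} {e : ι → H} {β : ι} {x : B} :
    x ∈ contraWeight k H ι θB e β ↔
      ∀ c : H →ₗ[k] k, θB (toSpanSingleton k B x ∘ₗ c) = c (e β) • x := by
  refine ⟨fun hx c => hx _ ?_, fun hx φ hφ => ?_⟩
  · rintro _ ⟨h, rfl⟩
    exact Submodule.smul_mem _ _ (Submodule.mem_span_singleton_self x)
  · obtain ⟨c, rfl⟩ := exists_eq_toSpanSingleton_comp_of_range_le hφ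
    exact hx c

theorem diagContra_toSpanSingleton_comp_apply {ρ : M →ₗ[k] M ⊗[k] H}
    (θB : (H →ₗ[k] B) →ₗ[k] B) (f : M →ₗ[k] B) (c : H →ₗ[k] k) {m : M} {a : H}
    (hm : ρ m = m ⊗ₜ[k] a) :
    diagContra k H ρ θB (toSpanSingleton k (M →ₗ[k] B) f ∘ₗ c) m =
      θB (toSpanSingleton k B (f m) ∘ₗ c ∘ₗ mulLeft k a) := by
  simp only [diagContra, LinearMap.comp_apply, llcomp_apply, lcomp_apply, hm]
  congr 1

end

theorem diag_weight_spaces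
    (M : Type*) [AddCommGroup M] [Module k M]
    (B : Type*) [AddCommGroup B] [Module k B]
    -- `H = k[Λ]`: a basis of group-like elements with `e_λ e_μ = e_{λ+μ}`, `S(e_λ) = e_{-λ}`
    (e : Module.Basis Λ k H)
    (hmul : ∀ lam mu : Λ, (e lam) * (e mu) = e (lam + mu))
    (ρ : M →ₗ[k] M ⊗[k] H)
    -- `M` is the direct sum of its weight spaces
    (hMds : DirectSum.IsInternal (fun α : Λ => comodWeight k H Λ ρ (⇑e) α))
    (θB : (H →ₗ[k] B) →ₗ[k] B)
    (ν : Λ) :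
    contraWeight k H Λ (diagContra k H ρ θB) (⇑e) ν =
      {f : M →ₗ[k] B | ∀ α : Λ, ∀ m ∈ comodWeight k H Λ ρ (⇑e) α,
        f m ∈ contraWeight k H Λ θB (⇑e) (ν - α)} := by
  have he0 : e 0 = 1 := eq_one_of_forall_mul_basis_eq e fun μ => by rw [hmul, zero_add]
  ext f
  simp only [Set.mem_ofPred_eq, mem_contraWeight_iff, mem_comodWeight_iff]
  constructor
  · intro hf α m hm c
    have hcancel : c ∘ₗ mulLeft k (e (-α)) ∘ₗ mulLeft k (e α) = c := by
      ext h
      simp [← mul_assoc, hmul, he0]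
    have hdiag := congr($(hf (c ∘ₗ mulLeft k (e (-α)))) m)
    rw [diagContra_toSpanSingleton_comp_apply θB f _ hm] at hdiag
    simpa [LinearMap.comp_assoc, hcancel, hmul, sub_eq_neg_add] using hdiag
  · intro hweight c
    refine LinearMap.ext_of_iSup_eq_top hMds.submodule_iSup_eq_top fun α m hm => ?_
    rw [mem_comodWeight_iff] at hm
    rw [diagContra_toSpanSingleton_comp_apply θB f c hm, hweight α m hm]
    simp [hmul]
end
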